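/- Consider a game with p players, where for each i ∈ {1,…,p} the strategy set C_i is a nonempty compact Hausdorff topological space, C = ∏_{i=1}^p C_i. Suppose for each i: (i) the payoff function θ_i : C → ℝ is continuous; (ii) the constraint correspondence K_i : C_{-i} ⇉ C_i is continuous with nonempty closed values; and (iii) the set gra(K_i) = {x ∈ C : x_i ∈ K_i(x_{-i})} is a Gδ subset of C. Then there exist continuous functions ϑ_i : C → [0,1], i ∈ {1,…,p}, such that the set of generalized Nash equilibria of (θ_i, K_i) equals the set of Nash equilibria of (ϑ_i, C_i): that is, x̂ ∈ C satisfies [x̂_i ∈ K_i(x̂_{-i}) and θ_i(x̂) ≥ θ_i(x_i, x̂_{-i}) for all x_i ∈ K_i(x̂_{-i}) and all i] if and only if [ϑ_i(x̂) ≥ ϑ_i(x_i, x̂_{-i}) for all x_i ∈ C_i and all i]. -/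

import Mathlib

/-!
Normalize each payoff `θ i` into `(-1, 1)` by an order isomorphism, so that comparisons are
unchanged. By Berge's maximum theorem the constrained value `vᵢ(x₋ᵢ) = max_{K i x₋ᵢ} θ i` is
continuous, and the graph of `K i`, being closed and `Gδ` in a normal space, is the zero set of a
continuous `gᵢ : C → [0, 1]`. Then `ϑ i = (min (θ i) vᵢ - gᵢ + 2) / 3` works: capping at `vᵢ`
makes every feasible maximizer attain the top value `vᵢ`, while the penalty `gᵢ` pushes every
infeasible strategy strictly below it.
-/

open Set

/-- Given a strategy `xi` for player `i` and strategies `xm` for the other players,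
`combineStrategy i xi xm` is the resulting full strategy profile `(xi, x₋ᵢ)`. -/
def combineStrategy {p : ℕ} {C : Fin p → Type*} (i : Fin p) (xi : C i)
    (xm : ∀ j : {j : Fin p // j ≠ i}, C j.1) : ∀ j, C j :=
  fun j => if h : j = i then h.symm ▸ xi else xm ⟨j, h⟩

/-- The strategies `x₋ᵢ` of the players other than `i` extracted from a full profile. -/
def minusStrategy {p : ℕ} {C : Fin p → Type*} (i : Fin p) (x : ∀ j, C j) :
    ∀ j : {j : Fin p // j ≠ i}, C j.1 :=
  fun j => x j.1

section Strategy

variable {p : ℕ} {C : Fin p → Type*}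

@[simp]
lemma combineStrategy_self (i : Fin p) (xi : C i) (xm : ∀ j : {j : Fin p // j ≠ i}, C j.1) :
    combineStrategy i xi xm i = xi := by
  simp [combineStrategy]

@[simp]
lemma minusStrategy_combineStrategy (i : Fin p) (xi : C i)
    (xm : ∀ j : {j : Fin p // j ≠ i}, C j.1) :
    minusStrategy i (combineStrategy i xi xm) = xm := by
  funext j
  simp [minusStrategy, combineStrategy, j.2]

@[simp]
lemma combineStrategy_minusStrategy (i : Fin p) (x : ∀ j, C j) :
    combineStrategy i (x i) (minusStrategy i x) = x := by
  funext j
  by_cases h : j = i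
  · subst h
    simp [combineStrategy]
  · simp [combineStrategy, h, minusStrategy]

variable [∀ i, TopologicalSpace (C i)]

lemma continuous_minusStrategy (i : Fin p) : Continuous (minusStrategy i : (∀ j, C j) → _) :=
  continuous_pi fun j => continuous_apply j.1

lemma continuous_combineStrategy (i : Fin p) :
    Continuous fun q : C i × (∀ j : {j : Fin p // j ≠ i}, C j.1) =>
      combineStrategy i q.1 q.2 := by
  refine continuous_pi fun j => ?_
  by_cases h : j = i
  · subst h
    simpa [combineStrategy] using continuous_fst
  · simp only [combineStrategy, h, ↓reduceDIte]
    exact (continuous_apply (⟨j, h⟩ : {j : Fin p // j ≠ i})).comp continuous_snd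

end Strategy

theorem exists_continuous_preimage_zero_of_isClosed_of_isGδ {X : Type*} [TopologicalSpace X]
    [NormalSpace X] {s : Set X} (hs : IsClosed s) (hsδ : IsGδ s) :
    ∃ f : C(X, ℝ), s = f ⁻¹' {0} ∧ ∀ x, f x ∈ Icc (0 : ℝ) 1 := by
  obtain ⟨U, hUo, rfl⟩ := hsδ.eq_iInter_nat
  choose f hf0 hf1 hf01 using fun n => exists_continuous_zero_one_of_isClosed hs
    (hUo n).isClosed_compl (disjoint_compl_right_iff_subset.2 (iInter_subset U n))
  have hw : Summable fun n : ℕ => (1 : ℝ) / 2 / 2 ^ n := summable_geometric_two' 1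
  have hterm_nonneg (n : ℕ) (x : X) : 0 ≤ f n x * (1 / 2 / 2 ^ n) :=
    mul_nonneg (hf01 n x).1 (by positivity)
  have hterm_le (n : ℕ) (x : X) : f n x * (1 / 2 / 2 ^ n) ≤ 1 / 2 / 2 ^ n :=
    mul_le_of_le_one_left (by positivity) (hf01 n x).2
  have hbound (n : ℕ) (x : X) : ‖f n x * (1 / 2 / 2 ^ n)‖ ≤ 1 / 2 / 2 ^ n := by
    rw [Real.norm_of_nonneg (hterm_nonneg n x)]
    exact hterm_le n x
  have hsum (x : X) : Summable fun n => f n x * (1 / 2 / 2 ^ n) :=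
    hw.of_norm_bounded fun n => hbound n x
  let F : C(X, ℝ) :=
    ⟨fun x => ∑' n, f n x * (1 / 2 / 2 ^ n), continuous_tsum (fun n => by fun_prop) hw hbound⟩
  refine ⟨F, ?_, fun x => ⟨tsum_nonneg (hterm_nonneg · x), ?_⟩⟩
  · ext x
    refine ⟨fun hx => ?_, fun hx => mem_iInter.2 fun n => ?_⟩
    · simp [F, fun n => hf0 n hx]
    · by_contra hxn
      refine (hsum x).tsum_pos (hterm_nonneg · x) n ?_ |>.ne' hx
      simp [hf1 n hxn]
  · calc F x ≤ ∑' n : ℕ, (1 : ℝ) / 2 / 2 ^ n := (hsum x).tsum_le_tsum (hterm_le · x) hw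
      _ = 1 := tsum_geometric_two' 1

def IsLowerHemicontinuous {Y Z : Type*} [TopologicalSpace Y] [TopologicalSpace Z]
    (K : Z → Set Y) : Prop :=
  ∀ G : Set Y, IsOpen G → IsOpen {z | (K z ∩ G).Nonempty}

def IsUpperHemicontinuous {Y Z : Type*} [TopologicalSpace Y] [TopologicalSpace Z]
    (K : Z → Set Y) : Prop :=
  ∀ F : Set Y, IsClosed F → IsClosed {z | (K z ∩ F).Nonempty}

section Berge

variable {Y Z γ : Type*} [TopologicalSpace Y] [TopologicalSpace Z]
  [LinearOrder γ] [TopologicalSpace γ] [OrderTopology γ] {K : Z → Set Y}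

theorem IsUpperHemicontinuous.isClosed_graph [RegularSpace Y] (hK : IsUpperHemicontinuous K)
    (hcl : ∀ z, IsClosed (K z)) : IsClosed {q : Y × Z | q.1 ∈ K q.2} := by
  refine isOpen_compl_iff.1 (isOpen_iff_forall_mem_open.2 ?_)
  rintro ⟨y₀, z₀⟩ (hy₀ : y₀ ∉ K z₀)
  obtain ⟨t, ht, htcl, htK⟩ :=
    exists_mem_nhds_isClosed_subset ((hcl z₀).isOpen_compl.mem_nhds hy₀)
  refine ⟨interior t ×ˢ {z | (K z ∩ t).Nonempty}ᶜ, ?_,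
    isOpen_interior.prod (hK t htcl).isOpen_compl,
    mk_mem_prod (mem_interior_iff_mem_nhds.2 ht) fun ⟨y, hyK, hyt⟩ => htK hyt hyK⟩
  rintro ⟨y, z⟩ ⟨hyt, hz⟩ (hyK : y ∈ K z)
  exact hz ⟨y, hyK, interior_subset hyt⟩

variable {f : Y × Z → γ} {v : Z → γ}

theorem IsLowerHemicontinuous.lowerSemicontinuous_of_isGreatest (hK : IsLowerHemicontinuous K)
    (hf : Continuous f) (hv : ∀ z, IsGreatest ((fun y => f (y, z)) '' K z) (v z)) :
    LowerSemicontinuous v := by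
  refine lowerSemicontinuous_iff_isOpen_preimage.2 fun a =>
    isOpen_iff_forall_mem_open.2 fun z₀ (hz₀ : a < v z₀) => ?_
  obtain ⟨y₀, hy₀, hfy₀⟩ := (hv z₀).1
  obtain ⟨G, W, hG, hW, hy₀G, hz₀W, hGW⟩ :=
    isOpen_prod_iff.1 (isOpen_lt continuous_const hf) y₀ z₀ (hz₀.trans_eq hfy₀.symm)
  refine ⟨W ∩ {z | (K z ∩ G).Nonempty}, ?_, hW.inter (hK G hG), hz₀W, y₀, hy₀, hy₀G⟩
  rintro z ⟨hzW, y, hyK, hyG⟩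
  exact (hGW (mk_mem_prod hyG hzW)).trans_le ((hv z).2 (mem_image_of_mem _ hyK))

theorem upperSemicontinuous_of_isGreatest [CompactSpace Y]
    (hK : IsClosed {q : Y × Z | q.1 ∈ K q.2}) (hf : Continuous f)
    (hv : ∀ z, IsGreatest ((fun y => f (y, z)) '' K z) (v z)) : UpperSemicontinuous v := by
  refine upperSemicontinuous_iff_isClosed_preimage.2 fun a => ?_
  -- `{z | a ≤ v z}` is the projection of a closed subset of `Y × Z`, along compact `Y`.
  have hproj : v ⁻¹' Ici a = Prod.snd '' ({q : Y × Z | q.1 ∈ K q.2} ∩ {q | a ≤ f q}) := by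
    ext z
    constructor
    · intro (hz : a ≤ v z)
      obtain ⟨y, hy, hfy⟩ := (hv z).1
      exact ⟨(y, z), ⟨hy, hz.trans_eq hfy.symm⟩, rfl⟩
    · rintro ⟨⟨y, z⟩, ⟨hy, hay⟩, rfl⟩
      exact hay.trans ((hv z).2 (mem_image_of_mem _ hy))
  rw [hproj]
  exact isClosedMap_snd_of_compactSpace _ (hK.inter (isClosed_le continuous_const hf))

/-- Berge's maximum theorem. -/
theorem exists_continuous_isGreatest_image [CompactSpace Y]
    (hgraph : IsClosed {q : Y × Z | q.1 ∈ K q.2}) (hK : IsLowerHemicontinuous K)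
    (hne : ∀ z, (K z).Nonempty) (hf : Continuous f) :
    ∃ v : Z → γ, Continuous v ∧ ∀ z, IsGreatest ((fun y => f (y, z)) '' K z) (v z) := by
  have hKz (z : Z) : IsCompact (K z) :=
    (hgraph.preimage (Continuous.prodMk_left z)).isCompact
  choose v hv using fun z =>
    ((hKz z).image (hf.comp (Continuous.prodMk_left z))).exists_isGreatest ((hne z).image _)
  exact ⟨v, continuous_iff_lower_upperSemicontinuous.2
    ⟨hK.lowerSemicontinuous_of_isGreatest hf hv, upperSemicontinuous_of_isGreatest hgraph hf hv⟩,
    hv⟩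

end Berge

theorem forall_min_sub_le_iff {α : Type*} {u h : α → ℝ} {s : Set α} {w : ℝ}
    (hw : IsGreatest (u '' s) w) (hh : ∀ y, 0 ≤ h y) (hs : s = h ⁻¹' {0}) (y₀ : α) :
    (∀ y, min (u y) w - h y ≤ min (u y₀) w - h y₀) ↔ y₀ ∈ s ∧ ∀ y ∈ s, u y ≤ u y₀ := by
  subst hs
  obtain ⟨⟨y₁, hy₁ : h y₁ = 0, rfl⟩, hmax⟩ := hw
  constructor
  · intro H
    have hy₁y₀ := H y₁
    rw [hy₁, min_self] at hy₁y₀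
    have hmin := min_le_left (u y₀) (u y₁)
    have hh₀ : h y₀ = 0 := by linarith [hh y₀, min_le_right (u y₀) (u y₁)]
    exact ⟨hh₀, fun y hy => (hmax (mem_image_of_mem u hy)).trans (by linarith)⟩
  · rintro ⟨hh₀ : h y₀ = 0, hy₀⟩ y
    rw [hh₀, min_eq_right (hy₀ y₁ hy₁), sub_zero]
    linarith [min_le_right (u y) (u y₁), hh y]

theorem exists_continuous_payoff_isMax_iff {Y Z : Type*} [TopologicalSpace Y]
    [TopologicalSpace Z] [CompactSpace Y] [RegularSpace Y] [NormalSpace (Y × Z)]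
    {θ : Y × Z → ℝ} (hθ : Continuous θ) {K : Z → Set Y} (hne : ∀ z, (K z).Nonempty)
    (hcl : ∀ z, IsClosed (K z)) (hlsc : IsLowerHemicontinuous K)
    (husc : IsUpperHemicontinuous K) (hδ : IsGδ {q : Y × Z | q.1 ∈ K q.2}) :
    ∃ ϑ : Y × Z → ℝ, Continuous ϑ ∧ (∀ q, ϑ q ∈ Icc (0 : ℝ) 1) ∧
      ∀ y₀ z, (∀ y, ϑ (y, z) ≤ ϑ (y₀, z)) ↔ y₀ ∈ K z ∧ ∀ y ∈ K z, θ (y, z) ≤ θ (y₀, z) := by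
  set u : Y × Z → ℝ := fun q => orderIsoIooNegOneOne ℝ (θ q)
  have hu : Continuous u :=
    continuous_subtype_val.comp ((orderIsoIooNegOneOne ℝ).continuous.comp hθ)
  have hu_mem (q : Y × Z) : u q ∈ Ioo (-1 : ℝ) 1 := Subtype.coe_prop _
  have hu_le (q q' : Y × Z) : u q ≤ u q' ↔ θ q ≤ θ q' :=
    Subtype.coe_le_coe.trans (orderIsoIooNegOneOne ℝ).le_iff_le
  have hgraph := husc.isClosed_graph hcl
  obtain ⟨g, hg, hg01⟩ := exists_continuous_preimage_zero_of_isClosed_of_isGδ hgraph hδ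
  obtain ⟨v, hv, hvmax⟩ := exists_continuous_isGreatest_image hgraph hlsc hne hu
  refine ⟨fun q => (min (u q) (v q.2) - g q + 2) / 3, by fun_prop, fun q => ?_, fun y₀ z => ?_⟩
  · obtain ⟨y, -, hy⟩ := (hvmax q.2).1
    have hv_gt : -1 < v q.2 := hy ▸ (hu_mem _).1
    have hmin_gt : -1 < min (u q) (v q.2) := lt_min (hu_mem q).1 hv_gt
    have hmin_lt : min (u q) (v q.2) < 1 := (min_le_left _ _).trans_lt (hu_mem q).2
    constructor <;> dsimp only <;> linarith [(hg01 q).1, (hg01 q).2]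
  · have hKz : K z = (fun y => g (y, z)) ⁻¹' {0} := by
      ext y
      exact Set.ext_iff.1 hg (y, z)
    have key := forall_min_sub_le_iff (hvmax z) (fun y => (hg01 (y, z)).1) hKz y₀
    simpa only [div_le_div_iff_of_pos_right (three_pos : (0 : ℝ) < 3), add_le_add_iff_right, hu_le] using key

theorem gnep_eq_nep_general
    {p : ℕ} (C : Fin p → Type*) [∀ i, TopologicalSpace (C i)] [∀ i, T2Space (C i)]
    [∀ i, CompactSpace (C i)]
    (θ : ∀ _ : Fin p, (∀ j, C j) → ℝ) (hθ : ∀ i, Continuous (θ i))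
    (K : ∀ i : Fin p, (∀ j : {j : Fin p // j ≠ i}, C j.1) → Set (C i))
    (hKne : ∀ i xm, (K i xm).Nonempty)
    (hKcl : ∀ i xm, IsClosed (K i xm))
    (hKlsc : ∀ i, ∀ G : Set (C i), IsOpen G →
      IsOpen {xm : ∀ j : {j : Fin p // j ≠ i}, C j.1 | (K i xm ∩ G).Nonempty})
    (hKusc : ∀ i, ∀ F : Set (C i), IsClosed F →
      IsClosed {xm : ∀ j : {j : Fin p // j ≠ i}, C j.1 | (K i xm ∩ F).Nonempty})
    (hGδ : ∀ i, ∃ U : ℕ → Set (∀ j, C j), (∀ n, IsOpen (U n)) ∧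
      {x : ∀ j, C j | x i ∈ K i (minusStrategy i x)} = ⋂ n, U n) :
    ∃ ϑ : ∀ _ : Fin p, (∀ j, C j) → ℝ,
      (∀ i, Continuous (ϑ i)) ∧ (∀ i x, ϑ i x ∈ Icc (0 : ℝ) 1) ∧
      ∀ xh : ∀ j, C j,
        ((∀ i, xh i ∈ K i (minusStrategy i xh) ∧
            ∀ xi ∈ K i (minusStrategy i xh),
              θ i (combineStrategy i xi (minusStrategy i xh)) ≤ θ i xh) ↔
          (∀ i, ∀ xi : C i,
            ϑ i (combineStrategy i xi (minusStrategy i xh)) ≤ ϑ i xh)) := by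
  have hplayer (i : Fin p) : ∃ ϑ : C i × (∀ j : {j : Fin p // j ≠ i}, C j.1) → ℝ,
      Continuous ϑ ∧ (∀ q, ϑ q ∈ Icc (0 : ℝ) 1) ∧ ∀ y₀ z, (∀ y, ϑ (y, z) ≤ ϑ (y₀, z)) ↔
        y₀ ∈ K i z ∧ ∀ y ∈ K i z, θ i (combineStrategy i y z) ≤ θ i (combineStrategy i y₀ z) := by
    have hδ : IsGδ {q : C i × (∀ j : {j : Fin p // j ≠ i}, C j.1) | q.1 ∈ K i q.2} := by
      simpa [preimage] using
        (isGδ_iff_eq_iInter_nat.2 (hGδ i)).preimage (continuous_combineStrategy i)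
    exact exists_continuous_payoff_isMax_iff ((hθ i).comp (continuous_combineStrategy i))
      (hKne i) (hKcl i) (hKlsc i) (hKusc i) hδ
  choose ϑ hϑ_cont hϑ_mem hϑ_max using hplayer
  refine ⟨fun i x => ϑ i (x i, minusStrategy i x),
    fun i => (hϑ_cont i).comp ((continuous_apply i).prodMk (continuous_minusStrategy i)),
    fun i x => hϑ_mem i _, fun xh => forall_congr' fun i => ?_⟩
  simpa using (hϑ_max i (xh i) (minusStrategy i xh)).symm

/-- Reduction of a generalized Nash game to a classical Nash game: for compact
strategy spaces, continuous payoffs `θ i`, continuous constraint correspondences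
`K i` with nonempty closed values whose graphs are `Gδ` subsets of `C`, there are
continuous payoffs `ϑ i : C → [0,1]` such that the generalized Nash equilibria of
`(θ i, K i)` coincide with the Nash equilibria of `(ϑ i, C i)`. -/
theorem gnep_eq_nep
    {p : ℕ} (C : Fin p → Type*) [∀ i, TopologicalSpace (C i)] [∀ i, T2Space (C i)]
    [∀ i, Nonempty (C i)] [∀ i, CompactSpace (C i)]
    (θ : ∀ _ : Fin p, (∀ j, C j) → ℝ) (hθ : ∀ i, Continuous (θ i))
    (K : ∀ i : Fin p, (∀ j : {j : Fin p // j ≠ i}, C j.1) → Set (C i))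
    (hKne : ∀ i xm, (K i xm).Nonempty)
    (hKcl : ∀ i xm, IsClosed (K i xm))
    (hKlsc : ∀ i, ∀ G : Set (C i), IsOpen G →
      IsOpen {xm : ∀ j : {j : Fin p // j ≠ i}, C j.1 | (K i xm ∩ G).Nonempty})
    (hKusc : ∀ i, ∀ F : Set (C i), IsClosed F →
      IsClosed {xm : ∀ j : {j : Fin p // j ≠ i}, C j.1 | (K i xm ∩ F).Nonempty})
    (hGδ : ∀ i, ∃ U : ℕ → Set (∀ j, C j), (∀ n, IsOpen (U n)) ∧
      {x : ∀ j, C j | x i ∈ K i (minusStrategy i x)} = ⋂ n, U n) :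
    ∃ ϑ : ∀ _ : Fin p, (∀ j, C j) → ℝ,
      (∀ i, Continuous (ϑ i)) ∧ (∀ i x, ϑ i x ∈ Icc (0 : ℝ) 1) ∧
      ∀ xh : ∀ j, C j,
        ((∀ i, xh i ∈ K i (minusStrategy i xh) ∧
            ∀ xi ∈ K i (minusStrategy i xh),
              θ i (combineStrategy i xi (minusStrategy i xh)) ≤ θ i xh) ↔
          (∀ i, ∀ xi : C i,
            ϑ i (combineStrategy i xi (minusStrategy i xh)) ≤ ϑ i xh)) :=
  gnep_eq_nep_general C θ hθ K hKne hKcl hKlsc hKusc hGδ
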